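/- For all α > 0, θ > 0 and β > 0, the third raw moment of the extended xgamma distribution is ∫₀^∞ x³ · f(x; α, θ, β) dx = ((α+2) · (θ·α·(α+1) + β·(α+3)·(α+4))) / (θ³·(θ+β)). -/

import Mathlib

/-!
Since `Γ(α + 2) = α (α + 1) Γ(α)`, the extended xgamma density is the mixture
`θ/(θ+β) · Gamma(α, θ) + β/(θ+β) · Gamma(α + 2, θ)` of two gamma densities with rate `θ`, and the
third moment of `Gamma(a, r)` is `Γ(a + 3) / (Γ(a) r³) = a (a + 1) (a + 2) / r³`.
-/

open MeasureTheory Real Set ProbabilityTheory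

noncomputable def exgPDFReal (α θ β x : ℝ) : ℝ :=
  θ ^ (α + 1) / ((θ + β) * Gamma (α + 2)) * (α ^ 2 + α + θ * β * x ^ 2) * exp (-θ * x) *
    x ^ (α - 1)

lemma Real.Gamma_add_two {a : ℝ} (h₀ : a ≠ 0) (h₁ : a + 1 ≠ 0) :
    Gamma (a + 2) = a * (a + 1) * Gamma a := by
  rw [show a + 2 = a + 1 + 1 by ring, Gamma_add_one h₁, Gamma_add_one h₀]
  ring

lemma Real.Gamma_add_three {a : ℝ} (h₀ : a ≠ 0) (h₁ : a + 1 ≠ 0) (h₂ : a + 2 ≠ 0) :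
    Gamma (a + 3) = a * (a + 1) * (a + 2) * Gamma a := by
  rw [show a + 3 = a + 2 + 1 by ring, Gamma_add_one h₂, Gamma_add_two h₀ h₁]
  ring

lemma pow_mul_gammaPDFReal_eqOn (a r : ℝ) (n : ℕ) :
    EqOn (fun x ↦ x ^ n * gammaPDFReal a r x)
      (fun x ↦ r ^ a / Gamma a * (x ^ (a + n - 1) * exp (-(r * x)))) (Ioi 0) := by
  intro x (hx : 0 < x)
  simp only [gammaPDFReal, if_pos hx.le]
  rw [show a + n - 1 = a - 1 + n by ring, rpow_add hx, rpow_natCast]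
  ring

lemma integrableOn_pow_mul_gammaPDFReal {a r : ℝ} (ha : 0 < a) (hr : 0 < r) (n : ℕ) :
    IntegrableOn (fun x ↦ x ^ n * gammaPDFReal a r x) (Ioi 0) := by
  refine IntegrableOn.congr_fun ?_ (pow_mul_gammaPDFReal_eqOn a r n).symm measurableSet_Ioi
  have hs : -1 < a + n - 1 := by linarith [n.cast_nonneg (α := ℝ)]
  have h : IntegrableOn (fun x ↦ x ^ (a + n - 1) * exp (-(r * x))) (Ioi 0) := by
    simpa using integrableOn_rpow_mul_exp_neg_mul_rpow hs one_pos hr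
  exact h.const_mul _

lemma integral_pow_mul_gammaPDFReal {a r : ℝ} (ha : 0 < a) (hr : 0 < r) (n : ℕ) :
    ∫ x in Ioi 0, x ^ n * gammaPDFReal a r x = Gamma (a + n) / (Gamma a * r ^ n) := by
  rw [setIntegral_congr_fun measurableSet_Ioi (pow_mul_gammaPDFReal_eqOn a r n),
    integral_const_mul, integral_rpow_mul_exp_neg_mul_Ioi (by positivity) hr, one_div,
    inv_rpow hr.le, rpow_add hr, rpow_natCast]
  field_simp

lemma integral_pow_three_mul_gammaPDFReal {a r : ℝ} (ha : 0 < a) (hr : 0 < r) :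
    ∫ x in Ioi 0, x ^ 3 * gammaPDFReal a r x = a * (a + 1) * (a + 2) / r ^ 3 := by
  rw [integral_pow_mul_gammaPDFReal ha hr, Nat.cast_ofNat,
    Gamma_add_three (by positivity) (by positivity) (by positivity)]
  field_simp [(Gamma_pos_of_pos ha).ne']

lemma exgPDFReal_eq_gammaPDFReal_mixture {α θ β x : ℝ} (hα : 0 < α) (hθ : 0 < θ) (hx : 0 < x) :
    exgPDFReal α θ β x =
      θ / (θ + β) * gammaPDFReal α θ x + β / (θ + β) * gammaPDFReal (α + 2) θ x := by
  simp only [exgPDFReal, gammaPDFReal, if_pos hx.le]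
  have hθ₁ : θ ^ (α + 1) = θ ^ α * θ := by rw [rpow_add_one hθ.ne']
  have hθ₂ : θ ^ (α + 2) = θ ^ α * θ ^ 2 := by rw [rpow_add hθ, rpow_two]
  have hx₂ : x ^ (α + 2 - 1) = x ^ (α - 1) * x ^ 2 := by
    rw [show α + 2 - 1 = α - 1 + 2 by ring, rpow_add hx, rpow_two]
  rw [Gamma_add_two hα.ne' (by positivity), hθ₁, hθ₂, hx₂]
  have hΓ := (Gamma_pos_of_pos hα).ne'
  field_simp

theorem exg_third_moment_general (α θ β : ℝ) (hα : 0 < α) (hθ : 0 < θ) :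
    ∫ x in Set.Ioi (0 : ℝ),
        x ^ 3 * ((θ ^ (α + 1) / ((θ + β) * Real.Gamma (α + 2))) * (α ^ 2 + α + θ * β * x ^ 2) *
          Real.exp (-θ * x) * x ^ (α - 1))
      = ((α + 2) * (θ * α * (α + 1) + β * (α + 3) * (α + 4))) / (θ ^ 3 * (θ + β)) := by
  change ∫ x in Ioi 0, x ^ 3 * exgPDFReal α θ β x = _
  have hmix : EqOn (fun x ↦ x ^ 3 * exgPDFReal α θ β x) (fun x ↦
      θ / (θ + β) * (x ^ 3 * gammaPDFReal α θ x) +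
        β / (θ + β) * (x ^ 3 * gammaPDFReal (α + 2) θ x)) (Ioi 0) := by
    intro x hx
    simp only [exgPDFReal_eq_gammaPDFReal_mixture hα hθ hx]
    ring
  have hα₂ : 0 < α + 2 := by positivity
  rw [setIntegral_congr_fun measurableSet_Ioi hmix,
    integral_add ((integrableOn_pow_mul_gammaPDFReal hα hθ 3).const_mul _)
      ((integrableOn_pow_mul_gammaPDFReal hα₂ hθ 3).const_mul _),
    integral_const_mul, integral_const_mul, integral_pow_three_mul_gammaPDFReal hα hθ,
    integral_pow_three_mul_gammaPDFReal hα₂ hθ]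
  field_simp
  ring

/-- The third raw moment of the extended xgamma distribution. -/
theorem exg_third_moment (α θ β : ℝ) (hα : 0 < α) (hθ : 0 < θ) (hβ : 0 < β) :
    ∫ x in Set.Ioi (0 : ℝ),
        x ^ 3 * ((θ ^ (α + 1) / ((θ + β) * Real.Gamma (α + 2))) * (α ^ 2 + α + θ * β * x ^ 2) *
          Real.exp (-θ * x) * x ^ (α - 1))
      = ((α + 2) * (θ * α * (α + 1) + β * (α + 3) * (α + 4))) / (θ ^ 3 * (θ + β)) :=
  exg_third_moment_general α θ β hα hθ
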